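/- arXiv:2207.08378 — 3 statements merged into one kernel-verified Lean document; each statement's English description precedes it below -/
import Mathlib

section
/- Let V be a commutative ring and let 𝔪 be an ideal of V which is idempotent (𝔪·𝔪 = 𝔪) and flat as a V-module. Then the multiplication map 𝔪 ⊗[V] 𝔪 → 𝔪, induced by x ⊗ y ↦ x·y, is an isomorphism of V-modules. -/
open TensorProduct

/-- The `V`-linear map `𝔪 ⊗[V] 𝔪 →ₗ[V] 𝔪` induced by the bilinear
multiplication map `(x, y) ↦ x · y`. -/
noncomputable def Ideal.mulLinearMap (V : Type*) [CommRing V] (𝔪 : Ideal V) :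
    (𝔪 ⊗[V] 𝔪) →ₗ[V] 𝔪 :=
  TensorProduct.lift <| LinearMap.mk₂ V (fun x y : 𝔪 => (x : V) • y)
    (fun x₁ x₂ y => by simp only [Submodule.coe_add, add_smul])
    (fun c x y => by simp only [Submodule.coe_smul, smul_eq_mul, mul_smul])
    (fun x y₁ y₂ => by simp only [smul_add])
    (fun c x y => smul_comm _ _ _)

/-- If `𝔪` is an idempotent ideal of a commutative ring `V` which is flat as a
`V`-module, then the multiplication map `𝔪 ⊗[V] 𝔪 → 𝔪`, `x ⊗ y ↦ x · y`, is an
isomorphism of `V`-modules. -/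
theorem bijective_mulLinearMap_of_idempotent_of_flat
    (V : Type*) [CommRing V] (𝔪 : Ideal V)
    (hid : 𝔪 * 𝔪 = 𝔪) [Module.Flat V 𝔪] :
    Function.Bijective (Ideal.mulLinearMap V 𝔪) := by
  constructor
  · -- injectivity: the map factors as `lTensor` of the inclusion followed by `rid`
    have hfac : ∀ t : 𝔪 ⊗[V] 𝔪,
        ((Ideal.mulLinearMap V 𝔪 t : 𝔪) : V) =
          ((TensorProduct.rid V 𝔪
            (LinearMap.lTensor 𝔪 (Submodule.subtype 𝔪) t) : 𝔪) : V) := by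
      intro t
      induction t using TensorProduct.induction_on with
      | zero => simp
      | tmul x y =>
          simp [Ideal.mulLinearMap, smul_eq_mul, mul_comm]
      | add a b ha hb =>
          simp only [map_add, Submodule.coe_add, ha, hb]
    intro a b hab
    have h1 : Function.Injective (LinearMap.lTensor 𝔪 (Submodule.subtype 𝔪)) :=
      Module.Flat.lTensor_preserves_injective_linearMap _ (Submodule.injective_subtype 𝔪)
    apply h1
    apply (TensorProduct.rid V 𝔪).injective
    have := congrArg (fun x : 𝔪 => (x : V)) hab
    simp only [hfac] at this
    exact Subtype.ext this
  · -- surjectivity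
    rintro ⟨m, hm⟩
    rw [← hid] at hm
    have : ∃ t : 𝔪 ⊗[V] 𝔪, ((Ideal.mulLinearMap V 𝔪 t : 𝔪) : V) = m := by
      refine Submodule.mul_induction_on hm ?_ ?_
      · intro x hx y hy
        exact ⟨⟨x, hx⟩ ⊗ₜ ⟨y, hy⟩, by simp [Ideal.mulLinearMap, smul_eq_mul]⟩
      · rintro a b ⟨ta, hta⟩ ⟨tb, htb⟩
        exact ⟨ta + tb, by simp [hta, htb]⟩
    obtain ⟨t, ht⟩ := this
    exact ⟨t, Subtype.ext ht⟩
end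

section
/- Let V be a commutative ring and A, B, C non-unital commutative V-algebras with non-unital V-algebra homomorphisms A → B and A → C. Form the commutative V-algebra T = (Unitization V B) ⊗[Unitization V A] (Unitization V C), where the algebra structures are induced by the unitalizations of the given maps, and let ε : T → V be the augmentation induced by the augmentations of Unitization V B and Unitization V C. Then, writing B □_A C = ker ε, the unitalization Unitization V (B □_A C) is isomorphic to T as a V-algebra. -/
open scoped TensorProduct

set_option synthInstance.maxHeartbeats 1000000
set_option maxHeartbeats 2000000

section

variable (V : Type*) [CommRing V]

/-- An ideal of a commutative `V`-algebra is a non-unital `V`-algebra: the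
multiplication and the `V`-action associate. -/
instance {R : Type*} [CommRing R] [Algebra V R] (I : Ideal R) :
    IsScalarTower V I I :=
  ⟨fun v x y => Subtype.ext <| by
    show ((v • x : I) : R) * y = v • ((x : R) * y)
    rw [Submodule.coe_smul_of_tower, smul_mul_assoc]⟩

instance {R : Type*} [CommRing R] [Algebra V R] (I : Ideal R) :
    SMulCommClass V I I :=
  ⟨fun v x y => Subtype.ext <| by
    show v • ((x : R) * y) = (x : R) * ((v • y : I) : R)
    rw [Submodule.coe_smul_of_tower, mul_smul_comm]⟩

variable {A B : Type*}
  [NonUnitalCommRing A] [Module V A] [IsScalarTower V A A] [SMulCommClass V A A]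
  [NonUnitalCommRing B] [Module V B] [IsScalarTower V B B] [SMulCommClass V B B]

/-- The `V`-algebra homomorphism `Unitization V A →ₐ[V] Unitization V B`
induced by a non-unital `V`-algebra homomorphism `A →ₙₐ[V] B`. -/
noncomputable def unitizationMap (f : A →ₙₐ[V] B) :
    Unitization V A →ₐ[V] Unitization V B :=
  Unitization.lift ((Unitization.inrNonUnitalAlgHom V B).comp f)

end


theorem aux_unitization_ker_equiv {V T : Type*} [CommRing V] [CommRing T] [Algebra V T]
    (ε : T →ₐ[V] V) :
    ∃ e : Unitization V (RingHom.ker (ε : T →+* V)) ≃ₐ[V] T,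
      ∀ z, e z = algebraMap V T z.fst + (z.snd.val : T) := by
  set I : Ideal T := RingHom.ker (ε : T →+* V)
  let incl : I →ₙₐ[V] T :=
    { toFun := Subtype.val
      map_smul' := fun _ _ => rfl
      map_zero' := rfl
      map_add' := fun _ _ => rfl
      map_mul' := fun _ _ => rfl }
  let φ : Unitization V I →ₐ[V] T := Unitization.lift incl
  have hφ : ∀ z : Unitization V I, φ z = algebraMap V T z.fst + (z.snd.val : T) := fun z => rfl
  have hbij : Function.Bijective φ := by
    constructor
    · intro x y hxy
      rw [hφ, hφ] at hxy
      have hx0 : ε (x.snd.val : T) = 0 := x.snd.property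
      have hy0 : ε (y.snd.val : T) = 0 := y.snd.property
      have h1 : x.fst = y.fst := by
        have := congrArg ε hxy
        simpa [hx0, hy0] using this
      have h2 : (x.snd.val : T) = (y.snd.val : T) := by
        rw [h1] at hxy
        exact add_left_cancel hxy
      exact Unitization.ext h1 (Subtype.ext h2)
    · intro t
      have hmem : t - algebraMap V T (ε t) ∈ I := by
        show ε _ = 0
        simp
      refine ⟨Unitization.inl (ε t) + Unitization.inr ⟨t - algebraMap V T (ε t), hmem⟩, ?_⟩
      rw [hφ]
      simp [Unitization.algebraMap_eq_inl]
  exact ⟨AlgEquiv.ofBijective φ hbij, fun z => hφ z⟩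

/-- Let `A, B, C` be non-unital commutative `V`-algebras with non-unital
homomorphisms `f : A → B` and `g : A → C`. Form the commutative `V`-algebra
`T = (Unitization V B) ⊗[Unitization V A] (Unitization V C)` and let
`ε : T → V` be the augmentation induced by the augmentations of
`Unitization V B` and `Unitization V C` (i.e. `ε (x ⊗ y) = x.fst * y.fst`).
Writing `B □_A C = ker ε`, the unitalization `Unitization V (B □_A C)` is
isomorphic to `T` as a `V`-algebra, via `(v, k) ↦ algebraMap V T v + k`. -/
theorem unitization_boxTensor_algEquiv {V A B C : Type*} [CommRing V]
    [NonUnitalCommRing A] [Module V A] [IsScalarTower V A A] [SMulCommClass V A A]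
    [NonUnitalCommRing B] [Module V B] [IsScalarTower V B B] [SMulCommClass V B B]
    [NonUnitalCommRing C] [Module V C] [IsScalarTower V C C] [SMulCommClass V C C]
    (f : A →ₙₐ[V] B) (g : A →ₙₐ[V] C) :
    letI : Algebra (Unitization V A) (Unitization V B) :=
      (unitizationMap V f).toRingHom.toAlgebra
    letI : Algebra (Unitization V A) (Unitization V C) :=
      (unitizationMap V g).toRingHom.toAlgebra
    letI : IsScalarTower V (Unitization V A) (Unitization V B) :=
      IsScalarTower.of_algebraMap_eq' ((unitizationMap V f).comp_algebraMap).symm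
    letI : IsScalarTower V (Unitization V A) (Unitization V C) :=
      IsScalarTower.of_algebraMap_eq' ((unitizationMap V g).comp_algebraMap).symm
    letI : Algebra V (Unitization V B ⊗[Unitization V A] Unitization V C) :=
      Algebra.TensorProduct.leftAlgebra
    ∀ ε : (Unitization V B ⊗[Unitization V A] Unitization V C) →ₐ[V] V,
      (∀ (x : Unitization V B) (y : Unitization V C),
        ε (x ⊗ₜ[Unitization V A] y) = x.fst * y.fst) →
      ∃ e : Unitization V (RingHom.ker (ε : _ →+* V)) ≃ₐ[V]
          Unitization V B ⊗[Unitization V A] Unitization V C,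
        ∀ z, e z = algebraMap V (Unitization V B ⊗[Unitization V A] Unitization V C) z.fst
          + (z.snd.val : Unitization V B ⊗[Unitization V A] Unitization V C) := by
  letI : Algebra (Unitization V A) (Unitization V B) :=
    (unitizationMap V f).toRingHom.toAlgebra
  letI : Algebra (Unitization V A) (Unitization V C) :=
    (unitizationMap V g).toRingHom.toAlgebra
  letI : IsScalarTower V (Unitization V A) (Unitization V B) :=
    IsScalarTower.of_algebraMap_eq' ((unitizationMap V f).comp_algebraMap).symm
  letI : IsScalarTower V (Unitization V A) (Unitization V C) :=
    IsScalarTower.of_algebraMap_eq' ((unitizationMap V g).comp_algebraMap).symm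
  letI : Algebra V (Unitization V B ⊗[Unitization V A] Unitization V C) :=
    Algebra.TensorProduct.leftAlgebra
  intro ε _
  exact aux_unitization_ker_equiv ε
end

section
/- Let V be a valuation ring (an integral domain satisfying ValuationRing, hence a local ring) with maximal ideal 𝔪. If 𝔪 is not a principal ideal, then 𝔪 is idempotent: 𝔪·𝔪 = 𝔪. -/
/-- The maximal ideal of a valuation ring is idempotent whenever it is not
principal. -/
theorem maximalIdeal_idempotent_of_not_isPrincipal
    (V : Type*) [CommRing V] [IsDomain V] [ValuationRing V]
    (h : ¬ (IsLocalRing.maximalIdeal V).IsPrincipal) :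
    IsLocalRing.maximalIdeal V * IsLocalRing.maximalIdeal V = IsLocalRing.maximalIdeal V := by
  apply le_antisymm Ideal.mul_le_right
  intro y hy
  by_contra hy2
  apply h
  refine ⟨y, le_antisymm ?_ ((Ideal.span_singleton_le_iff_mem _).mpr hy)⟩
  intro z hz
  obtain ⟨c, hc | hc⟩ := ValuationRing.cond z y
  · by_cases hc' : IsUnit c
    · obtain ⟨u, rfl⟩ := hc'
      rw [Ideal.submodule_span_eq, Ideal.mem_span_singleton]
      exact ⟨(u⁻¹ : Vˣ), by rw [← hc, mul_assoc, Units.mul_inv, mul_one]⟩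
    · exact absurd (hc ▸ Ideal.mul_mem_mul hz (IsLocalRing.mem_maximalIdeal c |>.mpr hc')) hy2
  · rw [Ideal.submodule_span_eq, Ideal.mem_span_singleton]
    exact ⟨c, hc.symm⟩
end
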